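/- Let G be a graph, I ⊆ V, and consider all-X labellings. Let M_∅ be the reduced adjacency matrix of (G,I,∅) over F₂ (rows indexed by all of V, columns by V∖I), let D be a maximal linearly independent set of rows of M_∅, and let C be the set of vertices whose rows are not in D. Then O := C is a minimum-cardinality set of outputs such that (G, I, O, λ) with λ ≡ X on V∖O has a Pauli flow: the reduced adjacency matrix of (G,I,C) is right-invertible, and no O' with |O'| < |C| makes the reduced adjacency matrix of (G,I,O') right-invertible. -/
import Mathlib


inductive MLabel | X | Y | Z | XY | XZ | YZ
deriving DecidableEq

open Finset

variable {V : Type} [Fintype V] [DecidableEq V]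

/-- The odd neighbourhood of a set of vertices. -/
def Odds (G : SimpleGraph V) [DecidableRel G.Adj] (A : Finset V) : Finset V :=
  Finset.univ.filter fun v => Odd (A ∩ G.neighborFinset v).card

/-- Pauli flow conditions (P1)-(P9) for a labelled open graph. -/
structure PauliFlow (G : SimpleGraph V) [DecidableRel G.Adj]
    (I O : Finset V) (lam : V → MLabel) (c : V → Finset V) (prec : V → V → Prop) : Prop where
  irrefl : ∀ u, ¬ prec u u
  trans : ∀ u v w, prec u v → prec v w → prec u w
  csub : ∀ u, u ∉ O → ∀ v ∈ c u, v ∉ I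
  P1 : ∀ u, u ∉ O → ∀ v ∈ c u, v ∉ O → u ≠ v →
      lam v ≠ MLabel.X → lam v ≠ MLabel.Y → prec u v
  P2 : ∀ u, u ∉ O → ∀ v ∈ Odds G (c u), v ∉ O → u ≠ v →
      lam v ≠ MLabel.Y → lam v ≠ MLabel.Z → prec u v
  P3 : ∀ u, u ∉ O → ∀ v, v ∉ O → ¬ prec u v → u ≠ v → lam v = MLabel.Y →
      (v ∈ c u ↔ v ∈ Odds G (c u))
  P4 : ∀ u, u ∉ O → lam u = MLabel.XY → u ∉ c u ∧ u ∈ Odds G (c u)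
  P5 : ∀ u, u ∉ O → lam u = MLabel.XZ → u ∈ c u ∧ u ∈ Odds G (c u)
  P6 : ∀ u, u ∉ O → lam u = MLabel.YZ → u ∈ c u ∧ u ∉ Odds G (c u)
  P7 : ∀ u, u ∉ O → lam u = MLabel.X → u ∈ Odds G (c u)
  P8 : ∀ u, u ∉ O → lam u = MLabel.Z → u ∈ c u
  P9 : ∀ u, u ∉ O → lam u = MLabel.Y → Xor' (u ∈ c u) (u ∈ Odds G (c u))

/-- Focussing conditions (F1)-(F3). -/
def Focussed (G : SimpleGraph V) [DecidableRel G.Adj]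
    (O : Finset V) (lam : V → MLabel) (c : V → Finset V) : Prop :=
  ∀ v, v ∉ O →
    (∀ w, w ∉ O → w ≠ v → w ∈ c v →
      lam w = MLabel.XY ∨ lam w = MLabel.X ∨ lam w = MLabel.Y) ∧
    (∀ w, w ∉ O → w ≠ v → w ∈ Odds G (c v) →
      lam w = MLabel.XZ ∨ lam w = MLabel.YZ ∨ lam w = MLabel.Y ∨ lam w = MLabel.Z) ∧
    (∀ w, w ∉ O → w ≠ v → lam w = MLabel.Y → (w ∈ c v ↔ w ∈ Odds G (c v)))

/-- The reduced adjacency matrix over F₂: rows indexed by non-outputs, columns by non-inputs. -/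
def redAdj (G : SimpleGraph V) [DecidableRel G.Adj] (I O : Finset V) :
    Matrix {v : V // v ∉ O} {v : V // v ∉ I} (ZMod 2) :=
  Matrix.of fun v u => if G.Adj v.val u.val then 1 else 0

/-- The `V × I̅` adjacency matrix (no rows deleted). -/
def fullAdj (G : SimpleGraph V) [DecidableRel G.Adj] (I : Finset V) :
    Matrix V {v : V // v ∉ I} (ZMod 2) :=
  Matrix.of fun v u => if G.Adj v u.val then 1 else 0

/-- If `C` is the set of vertices whose rows lie outside a maximal linearly
independent set of rows of the full adjacency matrix (rows ∉ C independent and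
spanning the row space), then `O := C` is a minimum-cardinality output set for
which the all-X labelled open graph has a Pauli flow: the reduced adjacency
matrix of `(G,I,C)` is right-invertible and no smaller output set achieves
right-invertibility. -/
theorem minimal_outputs_all_X (G : SimpleGraph V) [DecidableRel G.Adj]
    (I : Finset V) (C : Finset V)
    (hind : LinearIndependent (ZMod 2)
      (fun v : {v : V // v ∉ C} => fullAdj G I v.val))
    (hspan : ∀ w : V, fullAdj G I w ∈ Submodule.span (ZMod 2)
      (Set.range fun v : {v : V // v ∉ C} => fullAdj G I v.val)) :
    (∃ N : Matrix {v : V // v ∉ I} {v : V // v ∉ C} (ZMod 2),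
        redAdj G I C * N = 1) ∧
    (∀ O' : Finset V, O'.card < C.card →
      ¬ ∃ N : Matrix {v : V // v ∉ I} {v : V // v ∉ O'} (ZMod 2),
          redAdj G I O' * N = 1) := by
    classical
  constructor
  · -- rows of `redAdj G I C` are exactly the independent rows, so full row rank
    have hrows : (fun v : {v : V // v ∉ C} => redAdj G I C v) =
        (fun v : {v : V // v ∉ C} => fullAdj G I v.val) := rfl
    have hli : LinearIndependent (ZMod 2) (fun v : {v : V // v ∉ C} => redAdj G I C v) := by
      rw [hrows]; exact hind
    have hrank : (redAdj G I C).rank = Fintype.card {v : V // v ∉ C} :=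
      hli.rank_matrix
    have htop : LinearMap.range (redAdj G I C).mulVecLin = ⊤ := by
      apply Submodule.eq_top_of_finrank_eq
      rw [← Matrix.rank, hrank, Module.finrank_pi]
    have hsurj : Function.Surjective (redAdj G I C).mulVec := by
      intro y
      obtain ⟨x, hx⟩ := LinearMap.range_eq_top.mp htop y
      exact ⟨x, hx⟩
    exact Matrix.mulVec_surjective_iff_exists_right_inverse.mp hsurj
  · intro O' hcard ⟨N, hN⟩
    -- rows of `redAdj G I O'` are linearly independent
    have hinj : Function.Injective (redAdj G I O').vecMul := by
      intro x y hxy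
      have hxy' : Matrix.vecMul x (redAdj G I O') = Matrix.vecMul y (redAdj G I O') := hxy
      have : Matrix.vecMul x (redAdj G I O' * N) = Matrix.vecMul y (redAdj G I O' * N) := by
        rw [← Matrix.vecMul_vecMul, ← Matrix.vecMul_vecMul, hxy']
      simpa [hN] using this
    have hli' : LinearIndependent (ZMod 2) (fun v : {v : V // v ∉ O'} => redAdj G I O' v) :=
      Matrix.vecMul_injective_iff.mp hinj
    have hli2 : LinearIndependent (ZMod 2) (fun v : {v : V // v ∉ O'} => fullAdj G I v.val) :=
      hli'
    -- these rows live in the span `W` of the independent rows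
    set W : Submodule (ZMod 2) ({v : V // v ∉ I} → ZMod 2) :=
      Submodule.span (ZMod 2) (Set.range fun v : {v : V // v ∉ C} => fullAdj G I v.val) with hW
    have hfinW : Module.finrank (ZMod 2) W = Fintype.card {v : V // v ∉ C} :=
      (linearIndependent_iff_card_eq_finrank_span.mp hind).symm
    have hg : LinearIndependent (ZMod 2)
        (fun v : {v : V // v ∉ O'} => (⟨fullAdj G I v.val, hspan v.val⟩ : W)) := by
      apply LinearIndependent.of_comp W.subtype
      exact hli2
    have hle : Fintype.card {v : V // v ∉ O'} ≤ Module.finrank (ZMod 2) W :=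
      hg.fintype_card_le_finrank
    rw [hfinW] at hle
    have key : ∀ S : Finset V, Fintype.card {v : V // v ∉ S} = Fintype.card V - S.card := by
      intro S
      rw [Fintype.card_subtype]
      have : filter (fun x => x ∉ S) univ = univ \ S := by ext x; simp
      rw [this, Finset.card_univ_diff]
    have h1 := key O'
    have h2 := key C
    have hCle : C.card ≤ Fintype.card V := by
      simpa using Finset.card_le_univ C
    rw [h1, h2] at hle
    omega
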